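/- arXiv:1209.3796 — 2 statements merged into one kernel-verified Lean document; each statement's English description precedes it below -/
import Mathlib

section
/- Let ‖·‖ be a norm on ℝ^d with dual norm ‖·‖_*, and F, G continuous linear functionals. If w ∈ ℝ^d satisfies G(w) ≥ ½‖G‖_*² + ½‖w‖², then for all ε > 0: F(w) ≤ (‖G+εF‖_*² − ‖G‖_*²)/(2ε), and for all ε < 0: F(w) ≥ (‖G+εF‖_*² − ‖G‖_*²)/(2ε). -/
/-- If `w` is a gradient vector of `G`, i.e. `G w ≥ ½‖G‖² + ½‖w‖²`, then for all `ε > 0`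
the difference quotient of `ε ↦ ½‖G+εF‖²` bounds `F w` from above, and from below for
`ε < 0`. -/
theorem stmt6 {E : Type*} [NormedAddCommGroup E] [NormedSpace ℝ E]
    (F G : E →L[ℝ] ℝ) (w : E)
    (hw : (1 / 2) * ‖G‖ ^ 2 + (1 / 2) * ‖w‖ ^ 2 ≤ G w) :
    (∀ ε : ℝ, 0 < ε → F w ≤ (‖G + ε • F‖ ^ 2 - ‖G‖ ^ 2) / (2 * ε)) ∧
    (∀ ε : ℝ, ε < 0 → (‖G + ε • F‖ ^ 2 - ‖G‖ ^ 2) / (2 * ε) ≤ F w) := by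
  have key : ∀ ε : ℝ, ε * F w ≤ (‖G + ε • F‖ ^ 2 - ‖G‖ ^ 2) / 2 := by
    intro ε
    have h1 : (G + ε • F) w ≤ ‖G + ε • F‖ * ‖w‖ :=
      le_trans (le_abs_self _) ((G + ε • F).le_opNorm w)
    have h2 : (G + ε • F) w = G w + ε * F w := by simp
    nlinarith [sq_nonneg (‖G + ε • F‖ - ‖w‖)]
  constructor
  · intro ε hε
    rw [le_div_iff₀ (by positivity)]
    have := key ε
    nlinarith
  · intro ε hε
    rw [div_le_iff_of_neg (by nlinarith)]
    have := key ε
    nlinarith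
end

section
/- Let V be a real vector space, N : V → [0,∞) a seminorm, g ∈ V, and define Q⁺(f) := lim_{ε↓0} (N(g+εf)² − N(g)²)/(2ε) and Q⁻(f) := lim_{ε↑0} (N(g+εf)² − N(g)²)/(2ε). Then |Q^±(f₁) − Q^±(f₂)| ≤ N(f₁−f₂)·N(g) for all f₁, f₂ ∈ V. -/
/-!
Since `N` is a seminorm, `|N(g + εf₁) - N(g + εf₂)| ≤ |ε| N(f₁ - f₂)`. Factoring
`N(g + εf₁)² - N(g + εf₂)²` as a difference times a sum, the difference quotients of `f₁` and `f₂`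
therefore differ by at most `N(f₁ - f₂) (N(g + εf₁) + N(g + εf₂)) / 2`, and this bound tends to
`N(f₁ - f₂) N(g)` as `ε → 0`, from either side.
-/

open Filter Topology

namespace Seminorm

variable {V : Type*} [AddCommGroup V] [Module ℝ V] (N : Seminorm ℝ V)

noncomputable def sqDiffQuot (g f : V) (ε : ℝ) : ℝ :=
  (N (g + ε • f) ^ 2 - N g ^ 2) / (2 * ε)

lemma lipschitzWith_apply_add_smul (g f : V) :
    LipschitzWith (N f).toNNReal fun ε : ℝ => N (g + ε • f) :=
  LipschitzWith.of_dist_le' fun ε δ => by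
    calc dist (N (g + ε • f)) (N (g + δ • f)) ≤ N (g + ε • f - (g + δ • f)) :=
          abs_sub_map_le_sub N _ _
      _ = N f * dist ε δ := by
          rw [add_sub_add_left_eq_sub, ← sub_smul, map_smul_eq_mul, mul_comm]; rfl

lemma tendsto_apply_add_smul (g f : V) :
    Tendsto (fun ε : ℝ => N (g + ε • f)) (𝓝 0) (𝓝 (N g)) :=
  (N.lipschitzWith_apply_add_smul g f).continuous.tendsto' 0 (N g) (by simp)

lemma abs_apply_add_smul_sub_apply_add_smul_le (g f₁ f₂ : V) (ε : ℝ) :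
    |N (g + ε • f₁) - N (g + ε • f₂)| ≤ |ε| * N (f₁ - f₂) :=
  calc |N (g + ε • f₁) - N (g + ε • f₂)| ≤ N (g + ε • f₁ - (g + ε • f₂)) :=
        abs_sub_map_le_sub N _ _
    _ = |ε| * N (f₁ - f₂) := by
        rw [add_sub_add_left_eq_sub, ← smul_sub, map_smul_eq_mul, Real.norm_eq_abs]

lemma abs_sqDiffQuot_sub_sqDiffQuot_le (g f₁ f₂ : V) {ε : ℝ} (hε : ε ≠ 0) :
    |N.sqDiffQuot g f₁ ε - N.sqDiffQuot g f₂ ε|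
      ≤ N (f₁ - f₂) * ((N (g + ε • f₁) + N (g + ε • f₂)) / 2) := by
  set A := N (g + ε • f₁)
  set B := N (g + ε • f₂)
  have hAB : 0 ≤ A + B := add_nonneg (apply_nonneg N _) (apply_nonneg N _)
  have hdiff : N.sqDiffQuot g f₁ ε - N.sqDiffQuot g f₂ ε = (A - B) * (A + B) / (2 * ε) := by
    simp only [sqDiffQuot, A, B]
    field_simp
    ring
  rw [hdiff, abs_div, abs_mul, abs_of_nonneg hAB, abs_mul, abs_two,
    div_le_iff₀ (by positivity)]
  calc |A - B| * (A + B) ≤ |ε| * N (f₁ - f₂) * (A + B) :=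
        mul_le_mul_of_nonneg_right (N.abs_apply_add_smul_sub_apply_add_smul_le g f₁ f₂ ε) hAB
    _ = N (f₁ - f₂) * ((A + B) / 2) * (2 * |ε|) := by ring

lemma abs_sub_le_of_tendsto_sqDiffQuot {l : Filter ℝ} [l.NeBot] (hl : l ≤ 𝓝[≠] 0)
    {g f₁ f₂ : V} {Q₁ Q₂ : ℝ} (h₁ : Tendsto (N.sqDiffQuot g f₁) l (𝓝 Q₁))
    (h₂ : Tendsto (N.sqDiffQuot g f₂) l (𝓝 Q₂)) :
    |Q₁ - Q₂| ≤ N (f₁ - f₂) * N g := by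
  have hl₀ : l ≤ 𝓝 0 := hl.trans nhdsWithin_le_nhds
  have hbound : Tendsto (fun ε : ℝ => N (f₁ - f₂) * ((N (g + ε • f₁) + N (g + ε • f₂)) / 2))
      l (𝓝 (N (f₁ - f₂) * ((N g + N g) / 2))) :=
    (((N.tendsto_apply_add_smul g f₁).add (N.tendsto_apply_add_smul g f₂)).div_const 2
      |>.const_mul _).mono_left hl₀
  rw [add_self_div_two] at hbound
  refine le_of_tendsto_of_tendsto (h₁.sub h₂).abs hbound ?_
  filter_upwards [hl self_mem_nhdsWithin] with ε hε
  exact N.abs_sqDiffQuot_sub_sqDiffQuot_le g f₁ f₂ hε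

end Seminorm

/-- The maps `f ↦ D⁺f(∇g)` and `f ↦ D⁻f(∇g)` defined as one-sided derivatives of
`ε ↦ ½N(g+εf)²` are 1-Lipschitz: `|Q^±(f₁) − Q^±(f₂)| ≤ N(f₁−f₂) N(g)`. -/
theorem stmt9 {V : Type*} [AddCommGroup V] [Module ℝ V] (N : Seminorm ℝ V) (g : V)
    (Qp Qm : V → ℝ)
    (hQp : ∀ f : V, Tendsto (fun ε : ℝ => ((N (g + ε • f)) ^ 2 - (N g) ^ 2) / (2 * ε))
      (nhdsWithin 0 (Set.Ioi 0)) (nhds (Qp f)))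
    (hQm : ∀ f : V, Tendsto (fun ε : ℝ => ((N (g + ε • f)) ^ 2 - (N g) ^ 2) / (2 * ε))
      (nhdsWithin 0 (Set.Iio 0)) (nhds (Qm f))) :
    ∀ f₁ f₂ : V, |Qp f₁ - Qp f₂| ≤ N (f₁ - f₂) * N g ∧ |Qm f₁ - Qm f₂| ≤ N (f₁ - f₂) * N g :=
  fun f₁ f₂ =>
    ⟨N.abs_sub_le_of_tendsto_sqDiffQuot (nhdsGT_le_nhdsNE 0) (hQp f₁) (hQp f₂),
      N.abs_sub_le_of_tendsto_sqDiffQuot (nhdsLT_le_nhdsNE 0) (hQm f₁) (hQm f₂)⟩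
end
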